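/- arXiv:2001.03603 — 3 statements merged into one kernel-verified Lean document; each statement's English description precedes it below -/
import Mathlib

section
/- Let (X_n) be an irreducible finite Markov chain with stationary distribution π, and A, B nonempty subsets of states. Then π(A) · T⁻(B,A) ≤ T⁺(A,B), where T⁺(A,B) = max_{x∈A} E_x[hitting time of B] and T⁻(B,A) = min_{x∈B} E_x[hitting time of A]. -/
open MeasureTheory ENNReal

/-- The event that the chain does not visit `A` during steps `0,…,n`,
i.e. the hitting time of `A` exceeds `n`. -/
def noHit {S : Type*} (A : Finset S) (n : ℕ) : Set (ℕ → S) :=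
  {ω | ∀ k ≤ n, ω k ∉ A}

/-- Expected hitting time `E_x[τ_A] = ∑_{n≥0} P_x[τ_A > n]`. -/
noncomputable def expHit {S : Type*} [MeasurableSpace S]
    (P : S → Measure (ℕ → S)) (x : S) (A : Finset S) : ENNReal :=
  ∑' n : ℕ, P x (noHit A n)

/-- `n`-step transition probabilities (matrix power of the kernel). -/
noncomputable def matPow {S : Type*} [Fintype S] [DecidableEq S]
    (K : S → S → ENNReal) : ℕ → S → S → ENNReal
  | 0 => fun x y => if x = y then 1 else 0
  | n + 1 => fun x y => ∑ z, matPow K n x z * K z y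

/-- Irreducibility: every state reaches every state in some number of steps. -/
def IsIrreducibleKernel {S : Type*} [Fintype S] [DecidableEq S]
    (K : S → S → ENNReal) : Prop :=
  ∀ x y, ∃ n, 0 < matPow K n x y

/-- Row-stochastic kernel. -/
def IsStochastic {S : Type*} [Fintype S] (K : S → S → ENNReal) : Prop :=
  ∀ x, ∑ y, K x y = 1

/-- `π` is a stationary (probability) distribution for `K`. -/
def IsStationaryDistrib {S : Type*} [Fintype S] (K : S → S → ENNReal)
    (π : S → ENNReal) : Prop :=
  (∑ x, π x = 1) ∧ ∀ y, ∑ x, π x * K x y = π y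

/-- `P x` is the law of the Markov chain with kernel `K` started at `x`:
each `P x` is a probability measure whose finite-dimensional cylinder
probabilities are given by products of transition probabilities. -/
def IsMarkovChain {S : Type*} [Fintype S] [DecidableEq S] [MeasurableSpace S]
    (K : S → S → ENNReal) (P : S → Measure (ℕ → S)) : Prop :=
  (∀ x, IsProbabilityMeasure (P x)) ∧
  ∀ (x : S) (n : ℕ) (f : ℕ → S),
    P x {ω | ∀ i ≤ n, ω i = f i} =
      (if f 0 = x then 1 else 0) * ∏ i ∈ Finset.range n, K (f i) (f (i + 1))

/-!
Attach to the chain a flag recording whether `A` (flag `false`) or `B` (flag `true`) was visited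
last. Started from `π` with flag `false`, the flagged chain has marginal law `π` at every time, so
over `N` steps it spends expected time `N π(A)` in `A`. Its arrivals in `B` with flag `false` cut
the trajectory into cycles: each runs from `B` to `A`, taking at least `T⁻(B,A)` steps in
expectation, and then back to `B`, taking at most `T⁺(A,B)` steps in expectation and containing
all the time the cycle spends in `A`. With `R_N` the expected number of cycles completed by time
`N`, the first-step equations of the two hitting problems telescope along the flagged chain to
`R_N T⁻(B,A) ≤ N + O(1)` and `N π(A) ≤ R_N T⁺(A,B) + O(1)`, the `O(1)` terms being expected hitting
times, finite by irreducibility. Dividing by `N` and letting `N → ∞` gives the claim.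

No measurability is assumed, so `P x (noHit C n)` is computed from the cylinder probabilities
through subadditivity alone; this identifies `expHit` with the minimal solution of the
first-step equations.
-/

open Finset Matrix

theorem ENNReal.le_of_forall_natCast_mul_le_add {a b c : ℝ≥0∞} (hc : c ≠ ⊤)
    (h : ∀ N : ℕ, N * a ≤ N * b + c) : a ≤ b := by
  by_contra! hba
  have hd : a - b ≠ 0 := (tsub_pos_of_lt hba).ne'
  obtain ⟨N, hN⟩ := ENNReal.exists_nat_mul_gt hd hc
  have hb : (N : ℝ≥0∞) * b ≠ ⊤ := ENNReal.mul_ne_top (by simp) hba.ne_top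
  have : (N : ℝ≥0∞) * b + N * (a - b) ≤ N * b + c := by
    rw [← mul_add, add_tsub_cancel_of_le hba.le]; exact h N
  exact (ENNReal.add_le_add_iff_left hb).1 this |>.not_gt hN

/-- The sets `E i` need not be measurable: the lower bound comes from subadditivity on the
complement. -/
theorem MeasureTheory.measure_biUnion_finset_eq_sum_of_cover {Ω ι : Type*}
    [MeasurableSpace Ω] [Fintype ι] [DecidableEq ι] (μ : Measure Ω) [IsProbabilityMeasure μ]
    {E : ι → Set Ω} {w : ι → ℝ≥0∞} (hcover : ∀ ω, ∃ i, ω ∈ E i) (hE : ∀ i, μ (E i) ≤ w i)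
    (hw : ∑ i, w i ≤ 1) (s : Finset ι) : μ (⋃ i ∈ s, E i) = ∑ i ∈ s, w i := by
  refine le_antisymm ((measure_biUnion_finset_le s E).trans (sum_le_sum fun i _ ↦ hE i)) ?_
  set U := ⋃ i ∈ s, E i
  have hcompl : Uᶜ ⊆ ⋃ i ∈ sᶜ, E i := by
    intro ω hω
    obtain ⟨i, hi⟩ := hcover ω
    have : i ∉ s := fun his ↦ hω (Set.mem_biUnion his hi)
    exact Set.mem_biUnion (mem_compl.2 this) hi
  have hcovU : 1 ≤ μ U + ∑ i ∈ sᶜ, w i :=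
    calc 1 = μ (U ∪ Uᶜ) := by simp
      _ ≤ μ U + μ Uᶜ := measure_union_le U Uᶜ
      _ ≤ μ U + ∑ i ∈ sᶜ, w i := by
          gcongr
          exact (measure_mono hcompl).trans
            ((measure_biUnion_finset_le _ E).trans (sum_le_sum fun i _ ↦ hE i))
  have hsplit : ∑ i ∈ s, w i + ∑ i ∈ sᶜ, w i ≤ 1 := by rwa [sum_add_sum_compl]
  have hfin : ∑ i ∈ sᶜ, w i ≠ ⊤ :=
    ne_top_of_le_ne_top one_ne_top (le_of_add_le_right hsplit)
  exact (ENNReal.le_sub_of_add_le_right hfin hsplit).trans (tsub_le_iff_right.2 hcovU)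

namespace FiniteMarkov

section

variable {S : Type*} [Fintype S] [DecidableEq S]

/-- `killedCost K C c n x` is `E_x[c(X_n); τ_C > n]`, where `τ_C` is the hitting time of `C`
(counted from time `0`). -/
noncomputable def killedCost (K : S → S → ℝ≥0∞) (C : Finset S) (c : S → ℝ≥0∞) :
    ℕ → S → ℝ≥0∞
  | 0, x => if x ∈ C then 0 else c x
  | n + 1, x => if x ∈ C then 0 else ∑ y, K x y * killedCost K C c n y

/-- The Green function of the chain killed on `C`, applied to the cost `c`:
`E_x[∑_{n < τ_C} c(X_n)]`. With `c = 1` it is the expected hitting time of `C`. -/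
noncomputable def killedGreen (K : S → S → ℝ≥0∞) (C : Finset S) (c : S → ℝ≥0∞) (x : S) :
    ℝ≥0∞ :=
  ∑' n, killedCost K C c n x

variable {K : S → S → ℝ≥0∞} {C : Finset S} {c : S → ℝ≥0∞} {x : S}

theorem killedCost_of_mem (hx : x ∈ C) (n : ℕ) : killedCost K C c n x = 0 := by
  cases n <;> simp [killedCost, hx]

theorem killedCost_succ_of_notMem (hx : x ∉ C) (n : ℕ) :
    killedCost K C c (n + 1) x = ∑ y, K x y * killedCost K C c n y := by
  simp [killedCost, hx]

theorem killedGreen_of_mem (hx : x ∈ C) : killedGreen K C c x = 0 := by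
  simp [killedGreen, killedCost_of_mem hx]

theorem killedGreen_of_notMem (hx : x ∉ C) :
    killedGreen K C c x = c x + ∑ y, K x y * killedGreen K C c y := by
  simp only [killedGreen, ← ENNReal.tsum_mul_left]
  rw [tsum_eq_zero_add' ENNReal.summable, ← Summable.tsum_finsetSum fun _ _ ↦ ENNReal.summable]
  simp [killedCost, hx]

theorem killedGreen_one_of_notMem (hx : x ∉ C) :
    killedGreen K C 1 x = 1 + ∑ y, K x y * killedGreen K C 1 y :=
  killedGreen_of_notMem hx

theorem killedGreen_le_of_supersolution {f : S → ℝ≥0∞}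
    (hf : ∀ x ∉ C, c x + ∑ y, K x y * f y ≤ f x) (x : S) : killedGreen K C c x ≤ f x := by
  rw [killedGreen, ENNReal.tsum_eq_iSup_nat]
  refine iSup_le fun N => ?_
  induction N generalizing x with
  | zero => simp
  | succ N ih =>
    by_cases hx : x ∈ C
    · simp [killedCost_of_mem hx]
    calc ∑ n ∈ range (N + 1), killedCost K C c n x
        = c x + ∑ y, K x y * ∑ n ∈ range N, killedCost K C c n y := by
          simp only [sum_range_succ', killedCost_succ_of_notMem hx, mul_sum]
          rw [sum_comm, add_comm]
          simp [killedCost, hx]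
      _ ≤ c x + ∑ y, K x y * f y := by gcongr with y; exact ih y
      _ ≤ f x := hf x hx

theorem matPow_eq_pow (K : S → S → ℝ≥0∞) (n : ℕ) : matPow K n = Matrix.of K ^ n := by
  induction n with
  | zero => ext x y; simp [matPow, Matrix.one_apply]
  | succ n ih => ext x y; simp [matPow, ih, pow_succ, Matrix.mul_apply]

theorem matPow_succ_left (K : S → S → ℝ≥0∞) (n : ℕ) (x y : S) :
    matPow K (n + 1) x y = ∑ z, K x z * matPow K n z y := by
  simp [matPow_eq_pow, pow_succ', Matrix.mul_apply]

theorem killedCost_one_le_one (hK : IsStochastic K) (n : ℕ) (x : S) :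
    killedCost K C 1 n x ≤ 1 := by
  induction n generalizing x with
  | zero => simp only [killedCost]; split_ifs <;> simp
  | succ n ih =>
    by_cases hx : x ∈ C
    · simp [killedCost_of_mem hx]
    calc killedCost K C 1 (n + 1) x = ∑ y, K x y * killedCost K C 1 n y :=
          killedCost_succ_of_notMem hx n
      _ ≤ ∑ y, K x y * 1 := by gcongr with y; exact ih y
      _ = 1 := by simp [hK x]

theorem killedCost_one_antitone (hK : IsStochastic K) (x : S) :
    Antitone fun n ↦ killedCost K C 1 n x := by
  refine antitone_nat_of_succ_le fun n ↦ ?_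
  induction n generalizing x with
  | zero =>
    by_cases hx : x ∈ C
    · simp [killedCost_of_mem hx]
    simpa [killedCost, hx] using killedCost_one_le_one (C := C) hK 1 x
  | succ n ih =>
    by_cases hx : x ∈ C
    · simp [killedCost_of_mem hx]
    simp only [killedCost_succ_of_notMem hx]
    gcongr with y
    exact ih y

/-- Surviving `n` steps outside `C` and being at `z ∈ C` at time `n` are disjoint events. -/
theorem killedCost_one_add_matPow_le_one (hK : IsStochastic K) {z : S} (hz : z ∈ C)
    (n : ℕ) (x : S) : killedCost K C 1 n x + matPow K n x z ≤ 1 := by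
  induction n generalizing x with
  | zero =>
    by_cases hx : x = z
    · subst hx; simp [killedCost, matPow, hz]
    · simp [killedCost, matPow, hx]; split_ifs <;> simp
  | succ n ih =>
    calc killedCost K C 1 (n + 1) x + matPow K (n + 1) x z
        ≤ ∑ y, K x y * killedCost K C 1 n y + ∑ y, K x y * matPow K n y z := by
          rw [matPow_succ_left]; gcongr; simp only [killedCost]; split_ifs <;> simp
      _ = ∑ y, K x y * (killedCost K C 1 n y + matPow K n y z) := by
          simp [mul_add, sum_add_distrib]
      _ ≤ ∑ y, K x y * 1 := by gcongr with y; exact ih y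
      _ = 1 := by simp [hK x]

theorem killedCost_one_add_le_mul {n : ℕ} {δ : ℝ≥0∞} (hδ : ∀ y, killedCost K C 1 n y ≤ δ)
    (m : ℕ) (x : S) : killedCost K C 1 (n + m) x ≤ killedCost K C 1 m x * δ := by
  induction m generalizing x with
  | zero =>
    by_cases hx : x ∈ C
    · simp [killedCost_of_mem hx]
    · simpa [killedCost, hx] using hδ x
  | succ m ih =>
    by_cases hx : x ∈ C
    · simp [killedCost_of_mem hx]
    rw [← add_assoc, killedCost_succ_of_notMem hx, killedCost_succ_of_notMem hx, sum_mul]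
    refine sum_le_sum fun y _ ↦ ?_
    rw [mul_assoc]
    gcongr
    exact ih y

theorem killedCost_one_mul_le_pow {n : ℕ} {δ : ℝ≥0∞} (hδ : ∀ y, killedCost K C 1 n y ≤ δ)
    (k : ℕ) (x : S) : killedCost K C 1 (k * n) x ≤ δ ^ k := by
  induction k generalizing x with
  | zero => simp only [killedCost, zero_mul]; split_ifs <;> simp
  | succ k ih =>
    calc killedCost K C 1 ((k + 1) * n) x = killedCost K C 1 (n + k * n) x := by ring_nf
      _ ≤ killedCost K C 1 (k * n) x * δ := killedCost_one_add_le_mul hδ _ x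
      _ ≤ δ ^ k * δ := by gcongr; exact ih x
      _ = δ ^ (k + 1) := (pow_succ δ k).symm

/-- By irreducibility, within `n₀` steps the chain hits `C` with probability at least `1 - δ > 0`
from every start, so the survival probabilities decay geometrically. -/
theorem killedGreen_one_lt_top (hK : IsStochastic K) (hirr : IsIrreducibleKernel K)
    (hC : C.Nonempty) (x : S) : killedGreen K C 1 x < ⊤ := by
  obtain ⟨z, hz⟩ := hC
  choose N hN using fun y ↦ hirr y z
  set n₀ := univ.sup N + 1
  set δ := univ.sup fun y ↦ killedCost K C 1 n₀ y
  have hδ : δ < 1 := by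
    refine (Finset.sup_lt_iff (by simp)).2 fun y _ ↦ ?_
    calc killedCost K C 1 n₀ y ≤ killedCost K C 1 (N y) y :=
          killedCost_one_antitone hK y (Nat.le_succ_of_le (le_sup (mem_univ y)))
      _ < killedCost K C 1 (N y) y + matPow K (N y) y z :=
          ENNReal.lt_add_right (ne_top_of_le_ne_top one_ne_top (killedCost_one_le_one hK _ y))
            (hN y).ne'
      _ ≤ 1 := killedCost_one_add_matPow_le_one hK hz _ y
  have hdecay (n : ℕ) : killedCost K C 1 n x ≤ δ ^ (n / n₀) :=
    (killedCost_one_antitone hK x (Nat.div_mul_le_self n n₀)).trans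
      (killedCost_one_mul_le_pow (fun y ↦ le_sup (f := fun y ↦ killedCost K C 1 n₀ y)
        (mem_univ y)) _ x)
  calc killedGreen K C 1 x ≤ ∑' n, δ ^ (n / n₀) := ENNReal.tsum_le_tsum hdecay
    _ = ∑' p : ℕ × Fin n₀, δ ^ p.1 := by rw [← (Nat.divModEquiv n₀).tsum_eq]; rfl
    _ = n₀ * (1 - δ)⁻¹ := by
        rw [ENNReal.tsum_prod (f := fun k (_ : Fin n₀) ↦ δ ^ k)]
        simp [ENNReal.tsum_mul_left, ENNReal.tsum_geometric]
    _ < ⊤ := ENNReal.mul_lt_top (by simp) (by simpa using hδ)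

end

section

variable {S : Type*} [Fintype S] [DecidableEq S] {K : S → S → ℝ≥0∞} {n : ℕ}

noncomputable def pathWeight (K : S → S → ℝ≥0∞) (x : S) {n : ℕ} (g : Fin (n + 1) → S) :
    ℝ≥0∞ :=
  (if g 0 = x then 1 else 0) * ∏ i : Fin n, K (g i.castSucc) (g i.succ)

theorem pathWeight_cons (x s : S) (t : Fin (n + 1) → S) :
    pathWeight K x (Fin.cons s t : Fin (n + 2) → S) =
      (if s = x then 1 else 0) * ∑ y, K s y * pathWeight K y t := by
  simp [pathWeight, Fin.prod_univ_succ, ← mul_assoc]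

theorem sum_pathWeight_avoiding (K : S → S → ℝ≥0∞) (C : Finset S) (n : ℕ) (x : S) :
    ∑ g : Fin (n + 1) → S with ∀ i, g i ∉ C, pathWeight K x g = killedCost K C 1 n x := by
  induction n generalizing x with
  | zero =>
    rw [sum_filter, ← (Equiv.funUnique (Fin 1) S).symm.sum_comp]
    simp only [pathWeight, killedCost]
    rw [sum_eq_single x (fun y _ hy ↦ by simp [hy]) (by simp)]
    simp
  | succ n ih =>
    have hcons (s : S) (t : Fin (n + 1) → S) :
        (∀ i, (Fin.cons s t : Fin (n + 2) → S) i ∉ C) ↔ s ∉ C ∧ ∀ i, t i ∉ C := by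
      simp [Fin.forall_fin_succ]
    rw [sum_filter, ← (Fin.consEquiv fun _ ↦ S).sum_comp, Fintype.sum_prod_type]
    simp only [Fin.consEquiv, Equiv.coe_fn_mk, hcons, pathWeight_cons]
    rw [sum_eq_single x (fun s _ hs ↦ by simp [hs]) (by simp)]
    by_cases hx : x ∈ C
    · simp [hx, killedCost_of_mem hx]
    simp only [hx, not_false_eq_true, true_and, if_true, one_mul, killedCost_succ_of_notMem hx,
      ← ih, ← sum_filter, mul_sum]
    exact sum_comm

def cylinder {n : ℕ} (g : Fin (n + 1) → S) : Set (ℕ → S) := {ω | ∀ i : Fin (n + 1), ω i = g i}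

variable [MeasurableSpace S] {P : S → Measure (ℕ → S)}

theorem measure_cylinder (hMC : IsMarkovChain K P) (x : S) (g : Fin (n + 1) → S) :
    P x (cylinder g) = pathWeight K x g := by
  have hcast {i : ℕ} (hi : i < n + 1) : Fin.ofNat (n + 1) i = ⟨i, hi⟩ :=
    Fin.ext (by simp [Nat.mod_eq_of_lt hi])
  have hcyl : cylinder g = {ω | ∀ i ≤ n, ω i = g (Fin.ofNat (n + 1) i)} := by
    ext ω
    refine ⟨fun hω i hi ↦ ?_, fun hω i ↦ by simpa using hω i (Nat.lt_succ_iff.1 i.2)⟩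
    rw [hcast (Nat.lt_succ_of_le hi)]
    exact hω ⟨i, Nat.lt_succ_of_le hi⟩
  rw [hcyl, hMC.2 x n (fun i ↦ g (Fin.ofNat (n + 1) i)), pathWeight,
    ← Fin.prod_univ_eq_prod_range]
  congr 2
  funext i
  rw [hcast (by omega), hcast (by omega)]
  rfl

theorem measure_noHit (hK : IsStochastic K) (hMC : IsMarkovChain K P) (C : Finset S)
    (x : S) (n : ℕ) : P x (noHit C n) = killedCost K C 1 n x := by
  have : IsProbabilityMeasure (P x) := hMC.1 x
  have hnoHit :
      noHit C n = ⋃ g ∈ ({g | ∀ i, g i ∉ C} : Finset (Fin (n + 1) → S)), cylinder g := by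
    ext ω
    simp only [noHit, cylinder, Set.mem_iUnion, mem_filter, mem_univ, true_and, exists_prop]
    refine ⟨fun h ↦ ⟨fun i ↦ ω i, fun i ↦ h i (Nat.lt_succ_iff.1 i.2), fun _ ↦ rfl⟩, ?_⟩
    rintro ⟨g, hg, hω⟩ k hk
    simpa [hω ⟨k, Nat.lt_succ_of_le hk⟩] using hg ⟨k, Nat.lt_succ_of_le hk⟩
  rw [hnoHit, measure_biUnion_finset_eq_sum_of_cover (P x) (E := cylinder) (w := pathWeight K x)
    (fun ω ↦ ⟨fun i ↦ ω i, fun _ ↦ rfl⟩) (fun g ↦ (measure_cylinder hMC x g).le),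
    sum_pathWeight_avoiding]
  simpa [sum_pathWeight_avoiding] using (sum_pathWeight_avoiding K ∅ n x).trans_le
    (killedCost_one_le_one hK n x)

theorem expHit_eq_killedGreen (hK : IsStochastic K) (hMC : IsMarkovChain K P) (x : S)
    (C : Finset S) : expHit P x C = killedGreen K C 1 x :=
  tsum_congr (measure_noHit hK hMC C x)

end

section

variable {T : Type*} [Fintype T]

theorem dotProduct_add_sum_telescope {Q : Matrix T T ℝ≥0∞} {f r c : T → ℝ≥0∞}
    (h : f + r = c + Q *ᵥ f) {μ : ℕ → T → ℝ≥0∞} (hμ : ∀ n, μ (n + 1) = μ n ᵥ* Q) (N : ℕ) :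
    μ 0 ⬝ᵥ f + ∑ n ∈ range N, μ n ⬝ᵥ r = ∑ n ∈ range N, μ n ⬝ᵥ c + μ N ⬝ᵥ f := by
  induction N with
  | zero => simp
  | succ N ih =>
    rw [sum_range_succ, ← add_assoc, ih, sum_range_succ, add_assoc, ← dotProduct_add, h,
      dotProduct_add, dotProduct_mulVec, ← hμ, add_assoc]

variable [DecidableEq T]

/-- For `u ∈ C`, `returnCost Q C c u` is the expected cost `c` accumulated from `u` up to the
first return to `C`. -/
noncomputable def returnCost (Q : Matrix T T ℝ≥0∞) (C : Finset T) (c : T → ℝ≥0∞) (u : T) :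
    ℝ≥0∞ :=
  if u ∈ C then c u + (Q *ᵥ killedGreen Q C c) u else 0

theorem killedGreen_add_returnCost (Q : Matrix T T ℝ≥0∞) (C : Finset T) (c : T → ℝ≥0∞) :
    killedGreen Q C c + returnCost Q C c = c + Q *ᵥ killedGreen Q C c := by
  ext u
  by_cases hu : u ∈ C
  · simp [returnCost, hu, killedGreen_of_mem (K := Q) hu]
  · simp [returnCost, hu, killedGreen_of_notMem (K := Q) hu, mulVec, dotProduct]

theorem dotProduct_returnCost (Q : Matrix T T ℝ≥0∞) (C : Finset T) (c ν : T → ℝ≥0∞) :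
    ν ⬝ᵥ returnCost Q C c = ∑ u ∈ C, ν u * returnCost Q C c u :=
  (sum_subset (subset_univ C) fun u _ hu ↦ by simp [returnCost, hu]).symm

end

section

variable {S : Type*} [DecidableEq S] {A B : Finset S} {x : S} {p : Bool}

/-- The flag is `true` while the chain travels from `B` to `A` and `false` while it travels
from `A` to `B`; `nextFlag A B x p` is its value after the chain leaves `x`. -/
def nextFlag (A B : Finset S) (x : S) (p : Bool) : Bool :=
  if x ∈ A then false else if x ∈ B then true else p

theorem nextFlag_of_mem_left (hx : x ∈ A) : nextFlag A B x p = false := by simp [nextFlag, hx]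

theorem nextFlag_of_mem_right (hxA : x ∉ A) (hxB : x ∈ B) : nextFlag A B x p = true := by
  simp [nextFlag, hxA, hxB]

theorem nextFlag_true (hx : x ∉ A) : nextFlag A B x true = true := by
  by_cases hxB : x ∈ B <;> simp [nextFlag, hx, hxB]

theorem nextFlag_false (hx : x ∉ B) : nextFlag A B x false = false := by
  by_cases hxA : x ∈ A <;> simp [nextFlag, hxA, hx]

variable [Fintype S] {K : S → S → ℝ≥0∞}

noncomputable def flagKernel (K : S → S → ℝ≥0∞) (A B : Finset S) :
    Matrix (S × Bool) (S × Bool) ℝ≥0∞ :=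
  fun u v ↦ K u.1 v.1 * if v.2 = nextFlag A B u.1 u.2 then 1 else 0

theorem sum_flagKernel_mul (u : S × Bool) (f : S × Bool → ℝ≥0∞) :
    ∑ v, flagKernel K A B u v * f v = ∑ y, K u.1 y * f (y, nextFlag A B u.1 u.2) := by
  rw [Fintype.sum_prod_type]
  refine sum_congr rfl fun y _ ↦ ?_
  cases h : nextFlag A B u.1 u.2 <;> simp [flagKernel, h]

theorem sum_bool_vecMul_flagKernel (ν : S × Bool → ℝ≥0∞) (y : S) :
    ∑ p, (ν ᵥ* flagKernel K A B) (y, p) = ∑ x, (∑ p, ν (x, p)) * K x y := by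
  simp only [vecMul, dotProduct, Fintype.sum_prod_type, sum_mul]
  rw [sum_comm]
  refine sum_congr rfl fun x _ ↦ ?_
  rw [sum_comm]
  refine sum_congr rfl fun p _ ↦ ?_
  cases h : nextFlag A B x p <;> simp [flagKernel, h]

noncomputable def flagLaw (K : S → S → ℝ≥0∞) (A B : Finset S) (π : S → ℝ≥0∞) :
    ℕ → S × Bool → ℝ≥0∞
  | 0 => fun u ↦ if u.2 then 0 else π u.1
  | n + 1 => flagLaw K A B π n ᵥ* flagKernel K A B

variable {π : S → ℝ≥0∞}

theorem sum_bool_flagLaw (hstat : IsStationaryDistrib K π) (n : ℕ) (x : S) :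
    ∑ p, flagLaw K A B π n (x, p) = π x := by
  induction n generalizing x with
  | zero => simp [flagLaw]
  | succ n ih =>
    rw [flagLaw, sum_bool_vecMul_flagKernel]
    simp only [ih]
    exact hstat.2 x

theorem flagLaw_dotProduct_fst (hstat : IsStationaryDistrib K π) (n : ℕ) (g : S → ℝ≥0∞) :
    flagLaw K A B π n ⬝ᵥ (fun u ↦ g u.1) = ∑ x, π x * g x := by
  simp only [dotProduct, Fintype.sum_prod_type, ← sum_mul, sum_bool_flagLaw hstat]

theorem flagLaw_dotProduct_one (hstat : IsStationaryDistrib K π) (n : ℕ) :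
    flagLaw K A B π n ⬝ᵥ 1 = 1 :=
  (flagLaw_dotProduct_fst hstat n 1).trans (by simp [hstat.1])

theorem flagLaw_dotProduct_le (hstat : IsStationaryDistrib K π) (n : ℕ) {f : S × Bool → ℝ≥0∞}
    {H : ℝ≥0∞} (hf : ∀ u, f u ≤ H) : flagLaw K A B π n ⬝ᵥ f ≤ H :=
  calc flagLaw K A B π n ⬝ᵥ f ≤ flagLaw K A B π n ⬝ᵥ (H • 1) := sum_le_sum fun u _ ↦ by
        gcongr; simpa using hf u
    _ = H := by rw [dotProduct_smul, flagLaw_dotProduct_one hstat, smul_eq_mul, mul_one]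

noncomputable def flagHitBound (K : S → S → ℝ≥0∞) (A B : Finset S) (M : ℝ≥0∞)
    (u : S × Bool) : ℝ≥0∞ :=
  if u.2 then killedGreen K A 1 u.1 + M else killedGreen K B 1 u.1

theorem killedGreen_flagKernel_le (hK : IsStochastic K) (hAB : Disjoint A B) {M : ℝ≥0∞}
    (hM : ∀ a ∈ A, killedGreen K B 1 a ≤ M) (u : S × Bool) :
    killedGreen (flagKernel K A B) (B ×ˢ {false}) 1 u ≤ flagHitBound K A B M u := by
  refine killedGreen_le_of_supersolution (C := B ×ˢ {false}) (fun ⟨x, p⟩ hu ↦ ?_) u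
  rw [sum_flagKernel_mul]
  cases p
  · have hxB : x ∉ B := by simpa using hu
    simp [flagHitBound, nextFlag_false hxB, killedGreen_one_of_notMem hxB]
  · by_cases hxA : x ∈ A
    · have hxB : x ∉ B := disjoint_left.1 hAB hxA
      simpa [flagHitBound, nextFlag_of_mem_left hxA, ← killedGreen_one_of_notMem hxB] using
        le_add_left (hM x hxA)
    · simp [flagHitBound, nextFlag_true hxA, killedGreen_of_notMem hxA, mul_add,
        sum_add_distrib, ← sum_mul, hK x, add_assoc]

theorem killedGreen_flagKernel_occupation_le (hK : IsStochastic K) (hAB : Disjoint A B)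
    {M : ℝ≥0∞} (hM : ∀ a ∈ A, killedGreen K B 1 a ≤ M) (u : S × Bool) :
    killedGreen (flagKernel K A B) (B ×ˢ {false}) (fun v ↦ if v.1 ∈ A then 1 else 0) u ≤
      if u.2 then M else killedGreen K B 1 u.1 := by
  refine killedGreen_le_of_supersolution (C := B ×ˢ {false})
    (f := fun v ↦ if v.2 then M else killedGreen K B 1 v.1)
    (fun ⟨x, p⟩ hu ↦ ?_) u
  rw [sum_flagKernel_mul]
  cases p
  · have hxB : x ∉ B := by simpa using hu
    simp only [nextFlag_false hxB, killedGreen_one_of_notMem hxB, Bool.false_eq_true, if_false]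
    gcongr
    split_ifs <;> simp
  · by_cases hxA : x ∈ A
    · have hxB : x ∉ B := disjoint_left.1 hAB hxA
      simpa [nextFlag_of_mem_left hxA, hxA, ← killedGreen_one_of_notMem hxB] using hM x hxA
    · simp [nextFlag_true hxA, hxA, ← sum_mul, hK x]

theorem killedGreen_le_killedGreen_flagKernel (y : S) :
    killedGreen K A 1 y ≤ killedGreen (flagKernel K A B) (B ×ˢ {false}) 1 (y, true) := by
  refine killedGreen_le_of_supersolution
    (f := fun x ↦ killedGreen (flagKernel K A B) (B ×ˢ {false}) 1 (x, true)) (fun x hx ↦ ?_) y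
  rw [killedGreen_of_notMem (K := flagKernel K A B) (by simp), sum_flagKernel_mul,
    nextFlag_true hx]
  exact le_rfl

theorem le_returnCost_flagKernel (hAB : Disjoint A B) {m : ℝ≥0∞}
    (hm : ∀ b ∈ B, m ≤ killedGreen K A 1 b) (u : S × Bool) (hu : u ∈ B ×ˢ {false}) :
    m ≤ returnCost (flagKernel K A B) (B ×ˢ {false}) 1 u := by
  obtain ⟨b, p⟩ := u
  obtain ⟨hbB, rfl⟩ : b ∈ B ∧ p = false := by simpa using hu
  have hbA : b ∉ A := disjoint_right.1 hAB hbB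
  calc m ≤ killedGreen K A 1 b := hm b hbB
    _ = 1 + ∑ y, K b y * killedGreen K A 1 y := killedGreen_one_of_notMem hbA
    _ ≤ 1 + ∑ y, K b y * killedGreen (flagKernel K A B) (B ×ˢ {false}) 1 (y, true) := by
        gcongr with y; exact killedGreen_le_killedGreen_flagKernel y
    _ = returnCost (flagKernel K A B) (B ×ˢ {false}) 1 (b, false) := by
        simp [returnCost, hbB, mulVec, dotProduct, sum_flagKernel_mul,
          nextFlag_of_mem_right hbA hbB]

theorem returnCost_flagKernel_occupation_le (hK : IsStochastic K) (hAB : Disjoint A B)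
    {M : ℝ≥0∞} (hM : ∀ a ∈ A, killedGreen K B 1 a ≤ M) (u : S × Bool) (hu : u ∈ B ×ˢ {false}) :
    returnCost (flagKernel K A B) (B ×ˢ {false}) (fun v ↦ if v.1 ∈ A then 1 else 0) u ≤ M := by
  obtain ⟨b, p⟩ := u
  obtain ⟨hbB, rfl⟩ : b ∈ B ∧ p = false := by simpa using hu
  have hbA : b ∉ A := disjoint_right.1 hAB hbB
  calc returnCost (flagKernel K A B) (B ×ˢ {false}) (fun v ↦ if v.1 ∈ A then 1 else 0) (b, false)
      = ∑ y, K b y * killedGreen (flagKernel K A B) (B ×ˢ {false})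
          (fun v ↦ if v.1 ∈ A then 1 else 0) (y, true) := by
        simp [returnCost, hbB, hbA, mulVec, dotProduct, sum_flagKernel_mul,
          nextFlag_of_mem_right hbA hbB]
    _ ≤ ∑ y, K b y * M := by
        gcongr with y; simpa using killedGreen_flagKernel_occupation_le hK hAB hM (y, true)
    _ = M := by rw [← sum_mul, hK b, one_mul]

/-- The expected number of arrivals in `B` with flag `false`, i.e. of completed passages from
`A` to `B`, during the first `N` steps of the flagged chain started from `π`. -/
noncomputable def cycleCount (K : S → S → ℝ≥0∞) (A B : Finset S) (π : S → ℝ≥0∞) (N : ℕ) :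
    ℝ≥0∞ :=
  ∑ n ∈ range N, ∑ u ∈ B ×ˢ {false}, flagLaw K A B π n u

theorem flagLaw_dotProduct_le_sum_flagHitBound (hstat : IsStationaryDistrib K π) {M : ℝ≥0∞}
    {f : S × Bool → ℝ≥0∞} (hf : ∀ u, f u ≤ flagHitBound K A B M u) (n : ℕ) :
    flagLaw K A B π n ⬝ᵥ f ≤ ∑ u, flagHitBound K A B M u :=
  flagLaw_dotProduct_le hstat n fun u ↦ (hf u).trans (single_le_sum (by simp) (mem_univ u))

theorem mul_cycleCount_le (hK : IsStochastic K) (hstat : IsStationaryDistrib K π)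
    (hAB : Disjoint A B) {m M : ℝ≥0∞} (hm : ∀ b ∈ B, m ≤ killedGreen K A 1 b)
    (hM : ∀ a ∈ A, killedGreen K B 1 a ≤ M) (N : ℕ) :
    m * cycleCount K A B π N ≤ N + ∑ u, flagHitBound K A B M u := by
  set Q := flagKernel K A B
  set C : Finset (S × Bool) := B ×ˢ {false}
  set μ := flagLaw K A B π
  have htel := dotProduct_add_sum_telescope (killedGreen_add_returnCost Q C 1)
    (μ := μ) (fun _ ↦ rfl) N
  calc m * cycleCount K A B π N = ∑ n ∈ range N, ∑ u ∈ C, μ n u * m := by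
        simp [cycleCount, mul_sum, mul_comm, μ, C]
    _ ≤ ∑ n ∈ range N, μ n ⬝ᵥ returnCost Q C 1 := by
        gcongr with n
        rw [dotProduct_returnCost]
        gcongr with u hu
        exact le_returnCost_flagKernel hAB hm u hu
    _ ≤ μ 0 ⬝ᵥ killedGreen Q C 1 + ∑ n ∈ range N, μ n ⬝ᵥ returnCost Q C 1 := le_add_self
    _ = N + μ N ⬝ᵥ killedGreen Q C 1 := by simp [htel, μ, flagLaw_dotProduct_one hstat]
    _ ≤ N + ∑ u, flagHitBound K A B M u := by
        gcongr
        exact flagLaw_dotProduct_le_sum_flagHitBound hstat (killedGreen_flagKernel_le hK hAB hM) N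

theorem natCast_mul_le_cycleCount (hK : IsStochastic K) (hstat : IsStationaryDistrib K π)
    (hAB : Disjoint A B) {M : ℝ≥0∞} (hM : ∀ a ∈ A, killedGreen K B 1 a ≤ M) (N : ℕ) :
    N * ∑ x ∈ A, π x ≤ ∑ u, flagHitBound K A B M u + M * cycleCount K A B π N := by
  set Q := flagKernel K A B
  set C : Finset (S × Bool) := B ×ˢ {false}
  set μ := flagLaw K A B π
  set c : S × Bool → ℝ≥0∞ := fun v ↦ if v.1 ∈ A then 1 else 0
  have htel := dotProduct_add_sum_telescope (killedGreen_add_returnCost Q C c) (μ := μ)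
    (fun _ ↦ rfl) N
  have hc (n : ℕ) : μ n ⬝ᵥ c = ∑ x ∈ A, π x := by
    simp [μ, c, flagLaw_dotProduct_fst hstat n fun x ↦ if x ∈ A then 1 else 0]
  have hG (u : S × Bool) : killedGreen Q C c u ≤ flagHitBound K A B M u := by
    refine (killedGreen_flagKernel_occupation_le hK hAB hM u).trans ?_
    simp only [flagHitBound]
    split_ifs <;> simp
  calc N * ∑ x ∈ A, π x ≤ ∑ n ∈ range N, μ n ⬝ᵥ c + μ N ⬝ᵥ killedGreen Q C c := by simp [hc]
    _ = μ 0 ⬝ᵥ killedGreen Q C c + ∑ n ∈ range N, μ n ⬝ᵥ returnCost Q C c := htel.symm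
    _ ≤ ∑ u, flagHitBound K A B M u + ∑ n ∈ range N, ∑ u ∈ C, μ n u * M := by
        gcongr with n
        · exact flagLaw_dotProduct_le_sum_flagHitBound hstat hG 0
        rw [dotProduct_returnCost]
        gcongr with u hu
        exact returnCost_flagKernel_occupation_le hK hAB hM u hu
    _ = ∑ u, flagHitBound K A B M u + M * cycleCount K A B π N := by
        simp [cycleCount, mul_sum, mul_comm, μ, C]

theorem sum_mul_le_of_disjoint (hK : IsStochastic K) (hstat : IsStationaryDistrib K π)
    (hAB : Disjoint A B) {m M : ℝ≥0∞} (hm : ∀ b ∈ B, m ≤ killedGreen K A 1 b)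
    (hM : ∀ a ∈ A, killedGreen K B 1 a ≤ M) (hH : ∑ u, flagHitBound K A B M u ≠ ⊤)
    (hmfin : m ≠ ⊤) (hMfin : M ≠ ⊤) :
    (∑ x ∈ A, π x) * m ≤ M := by
  set H := ∑ u, flagHitBound K A B M u
  set R := cycleCount K A B π
  refine ENNReal.le_of_forall_natCast_mul_le_add (c := H * m + M * H) (by finiteness)
    fun N ↦ ?_
  calc N * ((∑ x ∈ A, π x) * m) = N * (∑ x ∈ A, π x) * m := by ring
    _ ≤ (H + M * R N) * m := by gcongr; exact natCast_mul_le_cycleCount hK hstat hAB hM N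
    _ = H * m + M * (m * R N) := by ring
    _ ≤ H * m + M * (N + H) := by gcongr; exact mul_cycleCount_le hK hstat hAB hm hM N
    _ = N * M + (H * m + M * H) := by ring

theorem sum_mul_iInf_killedGreen_le_iSup (hK : IsStochastic K) (hirr : IsIrreducibleKernel K)
    (hstat : IsStationaryDistrib K π) (hA : A.Nonempty) (hB : B.Nonempty) :
    (∑ x ∈ A, π x) * (⨅ x ∈ B, killedGreen K A 1 x) ≤ ⨆ x ∈ A, killedGreen K B 1 x := by
  by_cases hAB : Disjoint A B
  swap
  · obtain ⟨c, hcA, hcB⟩ := not_disjoint_iff.1 hAB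
    have : ⨅ x ∈ B, killedGreen K A 1 x = 0 :=
      nonpos_iff_eq_zero.1 ((iInf₂_le c hcB).trans (killedGreen_of_mem hcA).le)
    simp [this]
  have hAfin (x : S) := (killedGreen_one_lt_top hK hirr hA x).ne
  have hBfin (x : S) := (killedGreen_one_lt_top hK hirr hB x).ne
  set M := ⨆ x ∈ A, killedGreen K B 1 x
  have hMfin : M ≠ ⊤ := ne_top_of_le_ne_top (ENNReal.sum_ne_top.2 fun x _ ↦ hBfin x)
    (iSup₂_le fun x _ ↦ single_le_sum (fun _ _ ↦ zero_le) (mem_univ x))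
  have hH : ∑ u, flagHitBound K A B M u ≠ ⊤ :=
    ENNReal.sum_ne_top.2 fun u _ ↦ by unfold flagHitBound; split_ifs <;> simp [*]
  obtain ⟨b, hb⟩ := hB
  exact sum_mul_le_of_disjoint hK hstat hAB (fun b hb ↦ iInf₂_le b hb)
    (fun a ha ↦ le_iSup₂ (f := fun x _ ↦ killedGreen K B 1 x) a ha) hH
    (ne_top_of_le_ne_top (hAfin b) (iInf₂_le b hb)) hMfin

end

end FiniteMarkov

/-- For an irreducible finite Markov chain with stationary distribution `π` and
nonempty sets `A,B`: `π(A) · T⁻(B,A) ≤ T⁺(A,B)`. -/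
theorem stmt_8 {S : Type*} [Fintype S] [DecidableEq S] [MeasurableSpace S]
    (K : S → S → ENNReal) (P : S → Measure (ℕ → S)) (π : S → ENNReal)
    (hK : IsStochastic K) (hMC : IsMarkovChain K P)
    (hirr : IsIrreducibleKernel K) (hstat : IsStationaryDistrib K π)
    (A B : Finset S) (hA : A.Nonempty) (hB : B.Nonempty) :
    (∑ x ∈ A, π x) * (⨅ x ∈ B, expHit P x A) ≤ ⨆ x ∈ A, expHit P x B := by
  simp only [FiniteMarkov.expHit_eq_killedGreen hK hMC]
  exact FiniteMarkov.sum_mul_iInf_killedGreen_le_iSup hK hirr hstat hA hB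
end

section
/- Let (X_n) be an irreducible finite Markov chain with stationary distribution π. Suppose B = {x : T(x,A) > T(1/2)/π(A)} where T(x,A) = E_x[hitting time of A] and T(1/2) is the maximal worst-case expected hitting time over sets of stationary measure ≥ 1/2. Then π(B) ≤ 1/2. -/
/-!
Work with a discount `z < 1` and `W(x) = ∑ zⁿ P_x(Xₙ ∈ A)`, which satisfies
`W = 1_A + z K W`. Stationarity gives `(1 - z) ∑ π W = π(A)`, so `max W ≥ π(A)/(1 - z)`.
Before reaching `A` the chain does not contribute to `W`, so from `b ∈ B` one loses at least
`(1 - z) H_A(b) max W`, where `H_C(x) = ∑ zⁿ P_x(τ_C > n)`; and from any `x` one gains at most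
`H_B(x)` before reaching `B`. Both bounds are discounted maximum principles. Comparing the two
at maximisers of `W` on `B` and on the whole space gives `π(A) min_B H_A ≤ max H_B`, and letting
`z ↑ 1` yields `π(A) min_{b ∈ B} E_b[τ_A] ≤ max_x E_x[τ_B] ≤ T(1/2)` once `π(B) > 1/2`,
contradicting the definition of `B`.
-/

open MeasureTheory ENNReal

open Finset Filter Topology

lemma tsum_pow_mul_eq_add (z : ℝ≥0∞) (u : ℕ → ℝ≥0∞) :
    ∑' n, z ^ n * u n = u 0 + z * ∑' n, z ^ n * u (n + 1) := by
  rw [tsum_eq_zero_add' ENNReal.summable, ← ENNReal.tsum_mul_left]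
  simp only [pow_zero, one_mul, pow_succ', mul_assoc]

lemma tsum_pow_mul_le_inv {z : ℝ≥0∞} {u : ℕ → ℝ≥0∞} (hu : ∀ n, u n ≤ 1) :
    ∑' n, z ^ n * u n ≤ (1 - z)⁻¹ :=
  calc ∑' n, z ^ n * u n ≤ ∑' n, z ^ n :=
        ENNReal.tsum_le_tsum fun n => mul_le_of_le_one_right' (hu n)
    _ = (1 - z)⁻¹ := ENNReal.tsum_geometric z

lemma exists_lt_tsum_pow_mul {c : ℝ≥0∞} {u : ℕ → ℝ≥0∞} (h : c < ∑' n, u n) :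
    ∃ z < 1, c < ∑' n, z ^ n * u n := by
  obtain ⟨N, hN⟩ := lt_iSup_iff.1 (ENNReal.tsum_eq_iSup_nat (f := u) ▸ h)
  have hid : Tendsto (fun z => z) (𝓝[<] (1 : ℝ≥0∞)) (𝓝 1) :=
    tendsto_nhdsWithin_of_tendsto_nhds tendsto_id
  have hlim : Tendsto (fun z => ∑ n ∈ range N, z ^ n * u n) (𝓝[<] 1)
      (𝓝 (∑ n ∈ range N, u n)) := by
    simpa using tendsto_finsetSum (range N) fun n _ =>
      ENNReal.Tendsto.mul_const (ENNReal.Tendsto.pow (n := n) hid) (b := u n) (Or.inl (by simp))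
  obtain ⟨z, hzN, hz⟩ := ((hlim.eventually (lt_mem_nhds hN)).and self_mem_nhdsWithin).exists
  exact ⟨z, hz, hzN.trans_le (ENNReal.sum_le_tsum _)⟩

lemma exists_forall_lt_tsum_pow_mul {ι : Type*} (s : Finset ι) {c : ℝ≥0∞} {u : ι → ℕ → ℝ≥0∞}
    (h : ∀ i ∈ s, c < ∑' n, u i n) : ∃ z < 1, ∀ i ∈ s, c < ∑' n, z ^ n * u i n := by
  choose! z hz1 hz using fun i hi => exists_lt_tsum_pow_mul (h i hi)
  refine ⟨s.sup z, (Finset.sup_lt_iff zero_lt_one).2 hz1, fun i hi => (hz i hi).trans_le ?_⟩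
  exact ENNReal.tsum_le_tsum fun n => by gcongr; exact le_sup hi

-- The sets `E i` need not be measurable: subadditivity applied to `s` and to `sᶜ` pinches.
lemma measure_biUnion_finset_eq_sum {α ι : Type*} [MeasurableSpace α] [Fintype ι]
    {μ : Measure α} [IsProbabilityMeasure μ] {E : ι → Set α} (hcover : ⋃ i, E i = Set.univ)
    (hsum : ∑ i, μ (E i) ≤ 1) (s : Finset ι) : μ (⋃ i ∈ s, E i) = ∑ i ∈ s, μ (E i) := by
  classical
  refine le_antisymm (measure_biUnion_finset_le s E) ?_
  have hcompl : ∑ i ∈ sᶜ, μ (E i) ≠ ∞ :=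
    ne_top_of_le_ne_top ENNReal.one_ne_top ((sum_le_sum_of_subset (subset_univ _)).trans hsum)
  refine ENNReal.le_of_add_le_add_right hcompl ?_
  calc ∑ i ∈ s, μ (E i) + ∑ i ∈ sᶜ, μ (E i) ≤ μ Set.univ := by
        rw [sum_add_sum_compl, measure_univ]; exact hsum
    _ ≤ μ ((⋃ i ∈ s, E i) ∪ ⋃ i ∈ sᶜ, E i) := by
        refine measure_mono fun ω _ => ?_
        obtain ⟨i, hi⟩ := Set.mem_iUnion.1 (hcover.symm ▸ Set.mem_univ ω)
        by_cases his : i ∈ s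
        · exact Or.inl (Set.mem_biUnion his hi)
        · exact Or.inr (Set.mem_biUnion (mem_compl.2 his) hi)
    _ ≤ μ (⋃ i ∈ s, E i) + ∑ i ∈ sᶜ, μ (E i) :=
        (measure_union_le _ _).trans (by gcongr; exact measure_biUnion_finset_le _ _)

lemma sum_fun_fin_succ {S M : Type*} [Fintype S] [AddCommMonoid M] {n : ℕ}
    (F : (Fin (n + 1) → S) → M) : ∑ g, F g = ∑ y, ∑ g : Fin n → S, F (Fin.cons y g) := by
  rw [← Fintype.sum_prod_type']
  exact (Fintype.sum_equiv (Fin.consEquiv fun _ => S) _ _ fun _ => rfl).symm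

section Kernel

variable {S : Type*} [Fintype S] {K : S → S → ℝ≥0∞}

lemma sum_kernel_mul_le (hK : IsStochastic K) {u : S → ℝ≥0∞} {c : ℝ≥0∞} (hu : ∀ y, u y ≤ c)
    (x : S) : ∑ y, K x y * u y ≤ c :=
  calc ∑ y, K x y * u y ≤ ∑ y, K x y * c := by gcongr with y; exact hu y
    _ = c := by rw [← sum_mul, hK x, one_mul]

lemma sum_stationary_mul_sum_kernel {π : S → ℝ≥0∞} (hπ : IsStationaryDistrib K π)
    (u : S → ℝ≥0∞) : ∑ x, π x * ∑ y, K x y * u y = ∑ y, π y * u y := by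
  simp_rw [mul_sum, ← mul_assoc]
  rw [sum_comm]
  simp_rw [← sum_mul, hπ.2]

lemma tsum_pow_mul_sum_kernel (z : ℝ≥0∞) (u : ℕ → S → ℝ≥0∞) (x : S) :
    ∑' n, z ^ n * ∑ y, K x y * u n y = ∑ y, K x y * ∑' n, z ^ n * u n y := by
  simp_rw [mul_sum, ← ENNReal.tsum_mul_left]
  rw [← Summable.tsum_finsetSum fun _ _ => ENNReal.summable]
  simp_rw [mul_left_comm]

lemma le_of_le_or_le_discounted_step (hK : IsStochastic K) {z c : ℝ≥0∞} (hz : z < 1)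
    {V : S → ℝ≥0∞} (hV : ∀ x, V x ≠ ∞)
    (hstep : ∀ x, V x ≤ c ∨ V x ≤ z * ∑ y, K x y * V y + (1 - z) * c) (x : S) : V x ≤ c := by
  have : Nonempty S := ⟨x⟩
  obtain ⟨x₀, hx₀⟩ := Finite.exists_max V
  refine (hx₀ x).trans ?_
  rcases hstep x₀ with h | h
  · exact h
  have hsplit : z * V x₀ + (1 - z) * V x₀ ≤ z * V x₀ + (1 - z) * c := by
    rw [← add_mul, add_tsub_cancel_of_le hz.le, one_mul]
    exact h.trans (by gcongr; exact sum_kernel_mul_le hK hx₀ x₀)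
  have h1z : 1 - z ≠ 0 := (tsub_pos_of_lt hz).ne'
  exact (ENNReal.mul_le_mul_iff_right h1z (ENNReal.sub_ne_top ENNReal.one_ne_top)).1
    (ENNReal.le_of_add_le_add_left (ENNReal.mul_ne_top hz.ne_top (hV x₀)) hsplit)

end Kernel

section Discounted

variable {S : Type*} [Fintype S] [DecidableEq S] {K : S → S → ℝ≥0∞}

noncomputable def survivalProb (K : S → S → ℝ≥0∞) (C : Finset S) : ℕ → S → ℝ≥0∞
  | 0 => fun x => if x ∈ C then 0 else 1
  | n + 1 => fun x => if x ∈ C then 0 else ∑ y, K x y * survivalProb K C n y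

/-- `occupationProb K A n x = P_x(Xₙ ∈ A)`. -/
noncomputable def occupationProb (K : S → S → ℝ≥0∞) (A : Finset S) : ℕ → S → ℝ≥0∞
  | 0 => fun x => if x ∈ A then 1 else 0
  | n + 1 => fun x => ∑ y, K x y * occupationProb K A n y

noncomputable def discSurvival (K : S → S → ℝ≥0∞) (C : Finset S) (z : ℝ≥0∞) (x : S) : ℝ≥0∞ :=
  ∑' n, z ^ n * survivalProb K C n x

noncomputable def discOccupation (K : S → S → ℝ≥0∞) (A : Finset S) (z : ℝ≥0∞) (x : S) :
    ℝ≥0∞ :=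
  ∑' n, z ^ n * occupationProb K A n x

variable {A B C : Finset S} {z : ℝ≥0∞}

lemma survivalProb_le_one (hK : IsStochastic K) (n : ℕ) (x : S) : survivalProb K C n x ≤ 1 := by
  induction n generalizing x with
  | zero => unfold survivalProb; split_ifs <;> simp
  | succ n ih => unfold survivalProb; split_ifs <;> simp [sum_kernel_mul_le hK ih x]

lemma occupationProb_le_one (hK : IsStochastic K) (n : ℕ) (x : S) :
    occupationProb K A n x ≤ 1 := by
  induction n generalizing x with
  | zero => unfold occupationProb; split_ifs <;> simp
  | succ n ih => exact sum_kernel_mul_le hK ih x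

lemma discSurvival_eq (x : S) :
    discSurvival K C z x = if x ∈ C then 0 else 1 + z * ∑ y, K x y * discSurvival K C z y := by
  rw [discSurvival, tsum_pow_mul_eq_add]
  by_cases hx : x ∈ C
  · simp [survivalProb, hx]
  · simp only [survivalProb, hx, if_false, tsum_pow_mul_sum_kernel, discSurvival]

lemma discOccupation_eq (x : S) :
    discOccupation K A z x =
      (if x ∈ A then 1 else 0) + z * ∑ y, K x y * discOccupation K A z y := by
  rw [discOccupation, tsum_pow_mul_eq_add]
  simp only [occupationProb, tsum_pow_mul_sum_kernel, discOccupation]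

lemma discSurvival_le_inv (hK : IsStochastic K) (x : S) : discSurvival K C z x ≤ (1 - z)⁻¹ :=
  tsum_pow_mul_le_inv fun n => survivalProb_le_one hK n x

lemma discOccupation_le_inv (hK : IsStochastic K) (x : S) :
    discOccupation K A z x ≤ (1 - z)⁻¹ :=
  tsum_pow_mul_le_inv fun n => occupationProb_le_one hK n x

lemma discSurvival_ne_top (hK : IsStochastic K) (hz : z < 1) (x : S) :
    discSurvival K C z x ≠ ∞ :=
  ((discSurvival_le_inv hK x).trans_lt (ENNReal.inv_lt_top.2 (tsub_pos_of_lt hz))).ne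

lemma discOccupation_ne_top (hK : IsStochastic K) (hz : z < 1) (x : S) :
    discOccupation K A z x ≠ ∞ :=
  ((discOccupation_le_inv hK x).trans_lt (ENNReal.inv_lt_top.2 (tsub_pos_of_lt hz))).ne

lemma discOccupation_add_le (hK : IsStochastic K) (hz : z < 1) {M : ℝ≥0∞} (hMtop : M ≠ ∞)
    (hM : ∀ x, discOccupation K A z x ≤ M) (x : S) :
    discOccupation K A z x + (1 - z) * M * discSurvival K A z x ≤ M := by
  refine le_of_le_or_le_discounted_step hK hz
    (V := fun x => discOccupation K A z x + (1 - z) * M * discSurvival K A z x)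
    (fun x => ?_) (fun x => ?_) x
  · exact ENNReal.add_ne_top.2 ⟨discOccupation_ne_top hK hz x, ENNReal.mul_ne_top
      (ENNReal.mul_ne_top (ENNReal.sub_ne_top ENNReal.one_ne_top) hMtop)
      (discSurvival_ne_top hK hz x)⟩
  by_cases hx : x ∈ A
  · left
    rw [discSurvival_eq, if_pos hx, mul_zero, add_zero]
    exact hM x
  · right
    rw [discSurvival_eq x, discOccupation_eq x, if_neg hx, if_neg hx]
    apply le_of_eq
    simp only [mul_add, sum_add_distrib, mul_left_comm _ ((1 - z) * M), ← mul_sum]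
    ring

lemma discOccupation_le_discSurvival_add (hK : IsStochastic K) (hz : z < 1) {β : ℝ≥0∞}
    (hβ : ∀ b ∈ B, discOccupation K A z b ≤ β) (x : S) :
    discOccupation K A z x ≤ discSurvival K B z x + β := by
  set V := fun x => discOccupation K A z x - discSurvival K B z x
  suffices ∀ x, V x ≤ β from tsub_le_iff_left.1 (this x)
  refine le_of_le_or_le_discounted_step hK hz
    (fun x => ne_top_of_le_ne_top (discOccupation_ne_top hK hz x) tsub_le_self) (fun x => ?_)
  by_cases hx : x ∈ B
  · exact Or.inl (tsub_le_self.trans (hβ x hx))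
  refine Or.inr (le_add_right (tsub_le_iff_left.2 ?_))
  calc discOccupation K A z x ≤ 1 + z * ∑ y, K x y * discOccupation K A z y := by
        rw [discOccupation_eq x]; gcongr; split_ifs <;> simp
    _ ≤ 1 + z * ∑ y, K x y * (discSurvival K B z y + V y) := by
        gcongr with y; exact le_add_tsub
    _ = discSurvival K B z x + z * ∑ y, K x y * V y := by
        rw [discSurvival_eq x, if_neg hx]
        simp only [mul_add, sum_add_distrib]
        ring

lemma one_sub_mul_sum_stationary_mul_discOccupation (hK : IsStochastic K) (hz : z < 1)
    {π : S → ℝ≥0∞} (hπ : IsStationaryDistrib K π) :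
    (1 - z) * ∑ x, π x * discOccupation K A z x = ∑ a ∈ A, π a := by
  set W := ∑ x, π x * discOccupation K A z x
  have hW : W = ∑ a ∈ A, π a + z * W := by
    simp only [W]
    conv_lhs => enter [2, x]; rw [discOccupation_eq]
    simp only [mul_add, sum_add_distrib, mul_left_comm (π _) z, ← mul_sum,
      sum_stationary_mul_sum_kernel hπ, mul_ite, mul_one, mul_zero, sum_ite_mem, univ_inter]
  have hWtop : W ≠ ∞ := by
    refine ne_top_of_le_ne_top (ENNReal.inv_ne_top.2 (tsub_pos_of_lt hz).ne') ?_
    calc W ≤ ∑ x, π x * (1 - z)⁻¹ :=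
          sum_le_sum fun x _ => mul_le_mul_right (discOccupation_le_inv hK x) _
      _ = (1 - z)⁻¹ := by rw [← sum_mul, hπ.1, one_mul]
  rw [ENNReal.sub_mul fun _ _ => hWtop, one_mul]
  exact ENNReal.sub_eq_of_eq_add (ENNReal.mul_ne_top hz.ne_top hWtop) hW

end Discounted

/-- The discounted form of `π(A) · min_{b ∈ B} E_b[τ_A] ≤ max_x E_x[τ_B]`. -/
theorem stationary_mul_le_of_le_discSurvival {S : Type*} [Fintype S] [DecidableEq S]
    {K : S → S → ℝ≥0∞} {π : S → ℝ≥0∞} {A B : Finset S} {z c G : ℝ≥0∞}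
    (hK : IsStochastic K) (hπ : IsStationaryDistrib K π) (hz : z < 1) (hB : B.Nonempty)
    (hc : ∀ b ∈ B, c ≤ discSurvival K A z b) (hG : ∀ x, discSurvival K B z x ≤ G) :
    (∑ a ∈ A, π a) * c ≤ G := by
  have : Nonempty S := hB.to_subtype.map Subtype.val
  set W := discOccupation K A z
  obtain ⟨x₀, hx₀⟩ := Finite.exists_max W
  obtain ⟨b₀, hb₀, hb₀max⟩ := B.exists_max_image W hB
  have hMtop : W x₀ ≠ ∞ := discOccupation_ne_top hK hz x₀
  have hmain : (1 - z) * W x₀ * c ≤ G := by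
    refine ENNReal.le_of_add_le_add_left (discOccupation_ne_top (A := A) hK hz b₀) ?_
    calc W b₀ + (1 - z) * W x₀ * c ≤ W b₀ + (1 - z) * W x₀ * discSurvival K A z b₀ := by
          gcongr; exact hc b₀ hb₀
      _ ≤ W x₀ := discOccupation_add_le hK hz hMtop hx₀ b₀
      _ ≤ discSurvival K B z x₀ + W b₀ := discOccupation_le_discSurvival_add hK hz hb₀max x₀
      _ ≤ W b₀ + G := by rw [add_comm]; gcongr; exact hG x₀
  have hπA : ∑ a ∈ A, π a ≤ (1 - z) * W x₀ := by
    rw [← one_sub_mul_sum_stationary_mul_discOccupation hK hz hπ]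
    gcongr
    calc ∑ x, π x * W x ≤ ∑ x, π x * W x₀ := sum_le_sum fun x _ => mul_le_mul_right (hx₀ x) _
      _ = W x₀ := by rw [← sum_mul, hπ.1, one_mul]
  calc (∑ a ∈ A, π a) * c ≤ (1 - z) * W x₀ * c := by gcongr
    _ ≤ G := hmain

section Paths

variable {S : Type*} [DecidableEq S] {K : S → S → ℝ≥0∞}

noncomputable def pathProb (K : S → S → ℝ≥0∞) (x : S) {n : ℕ} (g : Fin (n + 1) → S) :
    ℝ≥0∞ :=
  if g 0 = x then ∏ i : Fin n, K (g i.castSucc) (g i.succ) else 0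

lemma pathProb_cons (x y : S) {n : ℕ} (g : Fin (n + 1) → S) :
    pathProb K x (Fin.cons y g : Fin (n + 2) → S) =
      if y = x then K y (g 0) * pathProb K (g 0) g else 0 := by
  simp only [pathProb, Fin.cons_zero, if_true, Fin.prod_univ_succ, Fin.castSucc_zero,
    Fin.cons_succ, ← Fin.succ_castSucc]

variable [Fintype S]

lemma sum_mul_pathProb (f : S → ℝ≥0∞) {n : ℕ} (g : Fin (n + 1) → S) :
    ∑ u, f u * pathProb K u g = f (g 0) * pathProb K (g 0) g :=
  sum_eq_single (g 0) (fun u _ hu => by simp [pathProb, Ne.symm hu]) (by simp)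

lemma sum_pathProb_avoiding (C : Finset S) (n : ℕ) (x : S) :
    ∑ g : Fin (n + 1) → S, (if ∀ i, g i ∉ C then pathProb K x g else 0) =
      survivalProb K C n x := by
  induction n generalizing x with
  | zero =>
    rw [← (Equiv.funUnique (Fin 1) S).symm.sum_comp]
    rw [Fintype.sum_eq_single x fun y hy => by simp [pathProb, hy]]
    simp [pathProb, survivalProb]
  | succ n ih =>
    have hcons : ∀ y (g : Fin (n + 1) → S),
        (∀ i, (Fin.cons y g : Fin (n + 2) → S) i ∉ C) ↔ y ∉ C ∧ ∀ i, g i ∉ C := fun y g => by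
      simp only [Fin.forall_fin_succ (n := n + 1), Fin.cons_zero, Fin.cons_succ]
    rw [sum_fun_fin_succ, Fintype.sum_eq_single x fun y hy => sum_eq_zero fun g _ => by simp [pathProb_cons, hy]]
    by_cases hx : x ∈ C
    · simp [hcons, hx, survivalProb]
    simp only [hcons, hx, not_false_eq_true, true_and, pathProb_cons, if_true, survivalProb,
      if_false, ← ih, mul_sum, mul_ite, mul_zero]
    rw [sum_comm]
    refine sum_congr rfl fun g _ => ?_
    split_ifs
    · exact (sum_mul_pathProb _ g).symm
    · simp

end Paths

namespace IsMarkovChain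

variable {S : Type*} [Fintype S] [DecidableEq S] [MeasurableSpace S] {K : S → S → ℝ≥0∞}
  {P : S → Measure (ℕ → S)}

lemma measure_prefix_eq (hMC : IsMarkovChain K P) (x : S) {n : ℕ} (g : Fin (n + 1) → S) :
    P x {ω | ∀ i : Fin (n + 1), ω i = g i} = pathProb K x g := by
  set f : ℕ → S := fun i => if h : i < n + 1 then g ⟨i, h⟩ else x
  have hset : {ω : ℕ → S | ∀ i : Fin (n + 1), ω i = g i} = {ω | ∀ i ≤ n, ω i = f i} := by
    ext ω
    simp only [Set.mem_ofPred_eq, f]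
    exact ⟨fun h i hi => by simpa [Nat.lt_succ_of_le hi] using h ⟨i, by omega⟩,
      fun h i => by simpa [i.2] using h i (Nat.le_of_lt_succ i.2)⟩
  rw [hset, hMC.2 x n f, ← Fin.prod_univ_eq_prod_range (fun i => K (f i) (f (i + 1)))]
  simp [f, pathProb, Fin.castSucc, Fin.succ, Fin.castAdd, Fin.castLE]

lemma measure_noHit (hK : IsStochastic K) (hMC : IsMarkovChain K P) (C : Finset S) (n : ℕ)
    (x : S) : P x (noHit C n) = survivalProb K C n x := by
  have := hMC.1 x
  have hnoHit : noHit C n =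
      ⋃ g ∈ univ.filter fun g : Fin (n + 1) → S => ∀ i, g i ∉ C,
        {ω | ∀ i : Fin (n + 1), ω i = g i} := by
    ext ω
    simp only [noHit, Set.mem_ofPred_eq, Set.mem_iUnion, mem_filter, mem_univ, true_and,
      exists_prop]
    exact ⟨fun h => ⟨fun i => ω i, fun i => h i (Nat.le_of_lt_succ i.2), fun _ => rfl⟩,
      fun ⟨g, hg, hω⟩ k hk => hω ⟨k, Nat.lt_succ_of_le hk⟩ ▸ hg _⟩
  have hcover : ⋃ g : Fin (n + 1) → S, {ω : ℕ → S | ∀ i : Fin (n + 1), ω i = g i} = Set.univ :=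
    Set.eq_univ_of_forall fun ω => Set.mem_iUnion.2 ⟨fun i => ω i, fun _ => rfl⟩
  have htotal : ∑ g : Fin (n + 1) → S, P x {ω | ∀ i : Fin (n + 1), ω i = g i} ≤ 1 := by
    simpa [hMC.measure_prefix_eq] using
      (sum_pathProb_avoiding (K := K) ∅ n x).trans_le (survivalProb_le_one hK n x)
  rw [hnoHit, measure_biUnion_finset_eq_sum hcover htotal, sum_filter,
    ← sum_pathProb_avoiding]
  simp only [hMC.measure_prefix_eq]

lemma expHit_eq_tsum_survivalProb (hK : IsStochastic K) (hMC : IsMarkovChain K P)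
    (C : Finset S) (x : S) : expHit P x C = ∑' n, survivalProb K C n x :=
  tsum_congr fun n => hMC.measure_noHit hK C n x

end IsMarkovChain

theorem stmt_10_general {S : Type*} [Fintype S] [DecidableEq S] [MeasurableSpace S]
    (K : S → S → ENNReal) (P : S → Measure (ℕ → S)) (π : S → ENNReal)
    (hK : IsStochastic K) (hMC : IsMarkovChain K P)
    (hstat : IsStationaryDistrib K π)
    (A : Finset S) (hApos : 0 < ∑ x ∈ A, π x)
    (B : Finset S)
    (hB : ∀ x : S, x ∈ B ↔
      (⨆ (C : Finset S) (_ : (2:ENNReal)⁻¹ ≤ ∑ y ∈ C, π y), ⨆ y, expHit P y C) /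
        (∑ x ∈ A, π x) < expHit P x A) :
    ∑ x ∈ B, π x ≤ 2⁻¹ := by
  set T := ⨆ (C : Finset S) (_ : (2:ENNReal)⁻¹ ≤ ∑ y ∈ C, π y), ⨆ y, expHit P y C
  by_contra! hBhalf
  have hBne : B.Nonempty := nonempty_of_sum_ne_zero (hBhalf.trans_le' bot_le).ne'
  have hπA_top : ∑ a ∈ A, π a ≠ ∞ := ne_top_of_le_ne_top ENNReal.one_ne_top
    (hstat.1 ▸ sum_le_sum_of_subset (subset_univ A))
  obtain ⟨z, hz, hzB⟩ := exists_forall_lt_tsum_pow_mul B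
    (u := fun b n => survivalProb K A n b) fun b hb =>
      hMC.expHit_eq_tsum_survivalProb hK A b ▸ (hB b).1 hb
  have hdisc : ∀ x, discSurvival K B z x ≤ T := fun x =>
    calc discSurvival K B z x ≤ ∑' n, survivalProb K B n x :=
          ENNReal.tsum_le_tsum fun n => mul_le_of_le_one_left' (pow_le_one₀ bot_le hz.le)
      _ = expHit P x B := (hMC.expHit_eq_tsum_survivalProb hK B x).symm
      _ ≤ T := le_iSup₂_of_le B hBhalf.le (le_iSup (fun y => expHit P y B) x)
  set c := B.inf' hBne (discSurvival K A z)
  have hlt : T < c * ∑ a ∈ A, π a :=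
    (ENNReal.div_lt_iff (Or.inl hApos.ne') (Or.inl hπA_top)).1 ((lt_inf'_iff hBne).2 hzB)
  have hle : (∑ a ∈ A, π a) * c ≤ T :=
    stationary_mul_le_of_le_discSurvival hK hstat hz hBne (fun b hb => inf'_le _ hb) hdisc
  exact hlt.not_ge (mul_comm c _ ▸ hle)

/-- The set of "unlucky" starting points `B = {x : E_x[τ_A] > T(1/2)/π(A)}` has
stationary measure at most `1/2`. -/
theorem stmt_10 {S : Type*} [Fintype S] [DecidableEq S] [MeasurableSpace S]
    (K : S → S → ENNReal) (P : S → Measure (ℕ → S)) (π : S → ENNReal)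
    (hK : IsStochastic K) (hMC : IsMarkovChain K P)
    (hirr : IsIrreducibleKernel K) (hstat : IsStationaryDistrib K π)
    (A : Finset S) (hA : A.Nonempty) (hApos : 0 < ∑ x ∈ A, π x)
    (B : Finset S)
    (hB : ∀ x : S, x ∈ B ↔
      (⨆ (C : Finset S) (_ : (2:ENNReal)⁻¹ ≤ ∑ y ∈ C, π y), ⨆ y, expHit P y C) /
        (∑ x ∈ A, π x) < expHit P x A) :
    ∑ x ∈ B, π x ≤ 2⁻¹ :=
  stmt_10_general K P π hK hMC hstat A hApos B hB
end

section
/- Let (u_j)_{j∈S} and (q_j)_{j∈S} be finite families of {0,1}-valued random variables such that for every subset J ⊆ S, E[∏_{j∈J} u_j] ≤ E[∏_{j∈J} q_j]. Then for every s > 0 and nonnegative weights (w_j), E[exp(s · ∑_j w_j u_j)] ≤ E[exp(s · ∑_j w_j q_j)]. -/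
/-!
For `{0,1}`-valued `x` one has `exp (a x) = 1 + (exp a - 1) x`, so expanding the product
`exp (∑ⱼ aⱼ xⱼ) = ∏ⱼ (1 + (exp aⱼ - 1) xⱼ)` writes the exponential moment as a combination of the
mixed moments `E[∏_{j ∈ J} xⱼ]` with coefficients `∏_{j ∈ J} (exp aⱼ - 1)`, which are nonnegative
when all `aⱼ ≥ 0`. Termwise domination of the mixed moments then gives the claim.
-/

open MeasureTheory Finset

lemma Real.exp_mul_eq_of_eq_zero_or_eq_one {x : ℝ} (hx : x = 0 ∨ x = 1) (a : ℝ) :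
    Real.exp (a * x) = (Real.exp a - 1) * x + 1 := by
  rcases hx with rfl | rfl <;> simp

lemma Real.exp_sum_mul_eq_sum_powerset {S : Type*} [Fintype S] (a x : S → ℝ)
    (hx : ∀ j, x j = 0 ∨ x j = 1) :
    Real.exp (∑ j, a j * x j) =
      ∑ J ∈ univ.powerset, (∏ j ∈ J, (Real.exp (a j) - 1)) * ∏ j ∈ J, x j := by
  classical
  rw [Real.exp_sum, prod_congr rfl fun j _ => Real.exp_mul_eq_of_eq_zero_or_eq_one (hx j) (a j),
    prod_add]
  simp [prod_mul_distrib]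

lemma Finset.prod_eq_zero_or_eq_one {S : Type*} (J : Finset S) {x : S → ℝ}
    (hx : ∀ j, x j = 0 ∨ x j = 1) : ∏ j ∈ J, x j = 0 ∨ ∏ j ∈ J, x j = 1 :=
  prod_induction x (fun y => y = 0 ∨ y = 1) (by rintro a b (rfl | rfl) (rfl | rfl) <;> simp)
    (Or.inr rfl) fun j _ => hx j

section BooleanFamily

variable {Ω S : Type*} [MeasurableSpace Ω] (μ : Measure Ω) [IsFiniteMeasure μ]
  {v : S → Ω → ℝ} (hv : ∀ j, Measurable (v j)) (hv01 : ∀ j ω, v j ω = 0 ∨ v j ω = 1)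
include hv hv01

lemma integrable_prod_of_eq_zero_or_eq_one (J : Finset S) :
    Integrable (fun ω => ∏ j ∈ J, v j ω) μ := by
  refine (integrable_const (1 : ℝ)).mono' (measurable_prod J fun j _ => hv j).aestronglyMeasurable
    (ae_of_all _ fun ω => ?_)
  rcases J.prod_eq_zero_or_eq_one (hv01 · ω) with h | h <;> simp [h]

lemma integral_exp_sum_mul_eq_sum_powerset [Fintype S] (a : S → ℝ) :
    ∫ ω, Real.exp (∑ j, a j * v j ω) ∂μ =
      ∑ J ∈ univ.powerset, (∏ j ∈ J, (Real.exp (a j) - 1)) * ∫ ω, ∏ j ∈ J, v j ω ∂μ := by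
  simp_rw [Real.exp_sum_mul_eq_sum_powerset a _ (hv01 · _)]
  rw [integral_finsetSum _ fun J _ =>
    (integrable_prod_of_eq_zero_or_eq_one μ hv hv01 J).const_mul _]
  simp_rw [integral_const_mul]

end BooleanFamily

/-- Mixed-moment majorization for Boolean families implies domination of exponential
moments of nonnegative weighted sums. -/
theorem stmt_13 {Ω₁ Ω₂ : Type*} [MeasurableSpace Ω₁] [MeasurableSpace Ω₂]
    {S : Type*} [Fintype S]
    (μ : Measure Ω₁) [IsProbabilityMeasure μ] (ν : Measure Ω₂) [IsProbabilityMeasure ν]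
    (u : S → Ω₁ → ℝ) (q : S → Ω₂ → ℝ)
    (hu : ∀ j, Measurable (u j)) (hq : ∀ j, Measurable (q j))
    (hu01 : ∀ j ω, u j ω = 0 ∨ u j ω = 1) (hq01 : ∀ j ω, q j ω = 0 ∨ q j ω = 1)
    (hmaj : ∀ J : Finset S, ∫ ω, ∏ j ∈ J, u j ω ∂μ ≤ ∫ ω, ∏ j ∈ J, q j ω ∂ν)
    (w : S → ℝ) (hw : ∀ j, 0 ≤ w j) (s : ℝ) (hs : 0 < s) :
    ∫ ω, Real.exp (s * ∑ j, w j * u j ω) ∂μ ≤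
      ∫ ω, Real.exp (s * ∑ j, w j * q j ω) ∂ν := by
  have hcoeff : ∀ j, 0 ≤ Real.exp (s * w j) - 1 := fun j =>
    sub_nonneg.2 (Real.one_le_exp (mul_nonneg hs.le (hw j)))
  simp only [mul_sum, ← mul_assoc]
  rw [integral_exp_sum_mul_eq_sum_powerset μ hu hu01, integral_exp_sum_mul_eq_sum_powerset ν hq hq01]
  exact sum_le_sum fun J _ => mul_le_mul_of_nonneg_left (hmaj J) (prod_nonneg fun j _ => hcoeff j)
end
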